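/- Let $A \in M_N(\{0,1\})$ be a primitive matrix, let $B$ be a unital C*-algebra, and suppose given elements $u_{\alpha\beta} \in B$ for admissible words $\alpha,\beta$ of length $1$ such that the matrices of range projections $p = (u_{\alpha\beta}u_{\alpha\beta}^*)$ and source projections $q$ are magic unitaries and $Ap = qA$. Then for each $n \ge 1$, the matrices $(p_{\alpha\beta})_{\alpha,\beta \in V_A^n}$, where $p_{\alpha\beta} = (u_{\alpha_1\beta_1}\cdots u_{\alpha_n\beta_n})(u_{\alpha_1\beta_1}\cdots u_{\alpha_n\beta_n})^*$ and each product $u_{\alpha_1\beta_1}\cdots u_{\alpha_n\beta_n}$ is assumed to be a partial isometry, satisfy $\sum_{\beta \in V_A^n} p_{\alpha\beta} = 1 = \sum_{\beta \in V_A^n} p_{\beta\alpha}$ for each $\alpha \in V_A^n$, i.e. form a magic unitary indexed by admissible words of length $n$. -/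

import Mathlib

/-! Write `p_{ab} = u_{ab} u_{ab}^*` and `q_{ab} = u_{ab}^* u_{ab}`. Projections in a C*-algebra
that sum to `1` are pairwise orthogonal, so sandwiching `A p = q A` between `q_{ab}` and `p_{cd}`
gives `A_{ac} q_{ab} p_{cd} = A_{bd} q_{ab} p_{cd}`; hence `u_{ab} u_{cd}`, which equals
`u_{ab} q_{ab} p_{cd} u_{cd}`, vanishes unless `A_{ac} = A_{bd}`. Consequently the word product
`u_{αβ}` vanishes when `α` is admissible and `β` is not, so the sum over admissible `β` is the
sum over all words, which collapses letter by letter to `∑_b u_{ab} u_{ab}^* = 1`. Columns are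
rows of the transpose `u_{ba}`, for which the vanishing condition is the same. -/

/-- Admissibility of a word `α₁ ⋯ α_{n+1}` for the `{0,1}`-matrix `A`:
`A_{αᵢ α_{i+1}} = 1` for all `i`. -/
def Adm {N : ℕ} (A : Matrix (Fin N) (Fin N) ℕ) {n : ℕ}
    (α : Fin (n + 1) → Fin N) : Prop :=
  ∀ i : Fin n, A (α i.castSucc) (α i.succ) = 1

instance {N n : ℕ} (A : Matrix (Fin N) (Fin N) ℕ) :
    DecidablePred (Adm A (n := n)) := fun _ => by
  unfold Adm; infer_instance

open Finset

def IsPartialIsometry {R : Type*} [Mul R] [Star R] (u : R) : Prop :=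
  u * star u * u = u

namespace IsPartialIsometry

theorem mul_star_mul {R : Type*} [Mul R] [Star R] {u : R} (hu : IsPartialIsometry u) :
    u * star u * u = u :=
  hu

variable {R : Type*} [Semiring R] [StarRing R] {u : R}

theorem isStarProjection_mul_star (hu : IsPartialIsometry u) : IsStarProjection (u * star u) where
  isIdempotentElem := by rw [IsIdempotentElem, ← mul_assoc, hu.mul_star_mul]
  isSelfAdjoint := .mul_star_self u

theorem isStarProjection_star_mul (hu : IsPartialIsometry u) : IsStarProjection (star u * u) where
  isIdempotentElem := by rw [IsIdempotentElem, mul_assoc, ← mul_assoc u, hu.mul_star_mul]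
  isSelfAdjoint := .star_mul_self u

end IsPartialIsometry

theorem IsStarProjection.mul_eq_zero_of_sum_eq_one {R ι : Type*} [NormedRing R] [StarRing R]
    [CStarRing R] [PartialOrder R] [StarOrderedRing R] [Fintype ι]
    {e : ι → R} (he : ∀ i, IsStarProjection (e i)) (hsum : ∑ i, e i = 1) {i j : ι}
    (hij : i ≠ j) : e i * e j = 0 := by
  classical
  have hsq : ∀ k, star (e k * e j) * (e k * e j) = e j * e k * e j := fun k => by
    rw [star_mul, (he j).isSelfAdjoint.star_eq, (he k).isSelfAdjoint.star_eq, mul_assoc,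
      ← mul_assoc (e k), (he k).isIdempotentElem.eq, mul_assoc]
  have htotal : ∑ k, star (e k * e j) * (e k * e j) = e j := by
    simp only [hsq, ← sum_mul, ← mul_sum, hsum, mul_one, (he j).isIdempotentElem.eq]
  have hrest : ∑ k ∈ univ.erase j, star (e k * e j) * (e k * e j) = 0 := by
    have hsplit := add_sum_erase univ (fun k => star (e k * e j) * (e k * e j)) (mem_univ j)
    rw [htotal, hsq j, (he j).isIdempotentElem.eq, (he j).isIdempotentElem.eq] at hsplit
    exact add_eq_left.mp hsplit
  have := (sum_eq_zero_iff_of_nonneg fun k _ => star_mul_self_nonneg (e k * e j)).mp hrest i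
    (mem_erase.mpr ⟨hij, mem_univ i⟩)
  exact (CStarRing.star_mul_self_eq_zero_iff _).mp this

theorem mul_eq_zero_of_transition_ne {B : Type*} [CStarAlgebra B] {N : ℕ}
    {A : Matrix (Fin N) (Fin N) ℕ} {u : Fin N → Fin N → B}
    (hu : ∀ a b, IsPartialIsometry (u a b))
    (hrange : ∀ d, ∑ b, u b d * star (u b d) = 1)
    (hsource : ∀ a, ∑ b, star (u a b) * u a b = 1)
    (hint : ∀ a d,
      ∑ b, A a b • (u b d * star (u b d)) = ∑ b, A b d • (star (u a b) * u a b))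
    {a b c d : Fin N} (h : A a c ≠ A b d) : u a b * u c d = 0 := by
  let _ := CStarAlgebra.spectralOrder B
  have _ := CStarAlgebra.spectralOrderedRing B
  set p := fun a b => u a b * star (u a b)
  set q := fun a b => star (u a b) * u a b
  have hp : ∀ a b, IsStarProjection (p a b) := fun a b => (hu a b).isStarProjection_mul_star
  have hq : ∀ a b, IsStarProjection (q a b) := fun a b => (hu a b).isStarProjection_star_mul
  have hcol : (∑ b', A a b' • p b' d) * p c d = A a c • p c d := by
    refine (sum_mul ..).trans ?_
    rw [sum_eq_single c (fun b' _ hb' => by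
        rw [smul_mul_assoc, IsStarProjection.mul_eq_zero_of_sum_eq_one (hp · d) (hrange d) hb',
          smul_zero])
      (by simp), smul_mul_assoc, (hp c d).isIdempotentElem.eq]
  have hrow : q a b * ∑ b', A b' d • q a b' = A b d • q a b := by
    refine (mul_sum ..).trans ?_
    rw [sum_eq_single b (fun b' _ hb' => by
        rw [mul_smul_comm,
          IsStarProjection.mul_eq_zero_of_sum_eq_one (hq a ·) (hsource a) hb'.symm, smul_zero])
      (by simp), mul_smul_comm, (hq a b).isIdempotentElem.eq]
  have hqp : A a c • (q a b * p c d) = A b d • (q a b * p c d) :=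
    calc A a c • (q a b * p c d) = q a b * ((∑ b', A a b' • p b' d) * p c d) := by
          rw [hcol, mul_smul_comm]
      _ = (q a b * ∑ b', A b' d • q a b') * p c d := by
          rw [← mul_assoc]; exact congrArg (q a b * · * p c d) (hint a d)
      _ = A b d • (q a b * p c d) := by rw [hrow, smul_mul_assoc]
  have hqp0 : q a b * p c d = 0 := by
    by_contra hne
    rw [← Nat.cast_smul_eq_nsmul ℂ, ← Nat.cast_smul_eq_nsmul ℂ (A b d)] at hqp
    exact h (by exact_mod_cast smul_left_injective ℂ hne hqp)
  calc u a b * u c d = (u a b * q a b) * (p c d * u c d) := by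
        simp only [p, q, ← mul_assoc, (hu a b).mul_star_mul, (hu c d).mul_star_mul]
    _ = u a b * (q a b * p c d) * u c d := by simp only [mul_assoc]
    _ = 0 := by rw [hqp0, mul_zero, zero_mul]

theorem adm_iff_tail {N n : ℕ} {A : Matrix (Fin N) (Fin N) ℕ} (α : Fin (n + 2) → Fin N) :
    Adm A α ↔ A (α 0) (α 1) = 1 ∧ Adm A (Fin.tail α) := by
  simp [Adm, Fin.forall_fin_succ, Fin.tail]

def wordProd {ι R : Type*} [Monoid R] (u : ι → ι → R) {n : ℕ} (α β : Fin n → ι) : R :=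
  (List.ofFn fun i => u (α i) (β i)).prod

section wordProd

variable {ι R : Type*} [Monoid R] (u : ι → ι → R)

@[simp]
theorem wordProd_zero (α β : Fin 0 → ι) : wordProd u α β = 1 := rfl

theorem wordProd_succ {n : ℕ} (α β : Fin (n + 1) → ι) :
    wordProd u α β = u (α 0) (β 0) * wordProd u (Fin.tail α) (Fin.tail β) := by
  rw [wordProd, List.ofFn_succ, List.prod_cons]; rfl

end wordProd

theorem sum_wordProd_mul_star {ι R : Type*} [Fintype ι] [Semiring R] [StarRing R]
    {u : ι → ι → R} (hrow : ∀ a, ∑ b, u a b * star (u a b) = 1) :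
    ∀ {n : ℕ} (α : Fin n → ι), ∑ β, wordProd u α β * star (wordProd u α β) = 1
  | 0, α => by simp
  | n + 1, α => by
    rw [← (Fin.consEquiv fun _ => ι).sum_comp, Fintype.sum_prod_type]
    calc ∑ b, ∑ β, wordProd u α (Fin.cons b β) * star (wordProd u α (Fin.cons b β))
        = ∑ b, u (α 0) b *
            (∑ β, wordProd u (Fin.tail α) β * star (wordProd u (Fin.tail α) β)) *
            star (u (α 0) b) := by
          simp only [wordProd_succ u α, Fin.cons_zero, Fin.tail_cons, star_mul, mul_sum, sum_mul,
            mul_assoc]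
      _ = 1 := by simp only [sum_wordProd_mul_star hrow, mul_one, hrow]

theorem wordProd_eq_zero_of_not_adm {N : ℕ} {A : Matrix (Fin N) (Fin N) ℕ} {R : Type*}
    [MonoidWithZero R] {u : Fin N → Fin N → R}
    (hu : ∀ {a b c d}, A a c ≠ A b d → u a b * u c d = 0) :
    ∀ {n : ℕ} (α β : Fin (n + 1) → Fin N), Adm A α → ¬ Adm A β → wordProd u α β = 0
  | 0, _, _, _, hβ => absurd (fun i => i.elim0) hβ
  | n + 1, α, β, hα, hβ => by
    rw [adm_iff_tail] at hα hβ
    rw [wordProd_succ]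
    by_cases hβ0 : A (β 0) (β 1) = 1
    · rw [wordProd_eq_zero_of_not_adm @hu _ _ hα.2 fun h => hβ ⟨hβ0, h⟩, mul_zero]
    · have hne : A (α 0) (Fin.tail α 0) ≠ A (β 0) (Fin.tail β 0) := by
        simpa only [Fin.tail, Fin.succ_zero_eq_one, hα.1] using Ne.symm hβ0
      rw [wordProd_succ, ← mul_assoc, hu hne, zero_mul]

theorem sum_adm_wordProd_mul_star {N : ℕ} {A : Matrix (Fin N) (Fin N) ℕ} {R : Type*}
    [Semiring R] [StarRing R] {u : Fin N → Fin N → R}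
    (hrow : ∀ a, ∑ b, u a b * star (u a b) = 1)
    (hu : ∀ {a b c d}, A a c ≠ A b d → u a b * u c d = 0) {n : ℕ}
    (α : Fin (n + 1) → Fin N) (hα : Adm A α) :
    ∑ β ∈ univ.filter (Adm A), wordProd u α β * star (wordProd u α β) = 1 := by
  rw [sum_filter_of_ne fun β _ hβ => by_contra fun hnot => hβ (by
    rw [wordProd_eq_zero_of_not_adm @hu α β hα hnot, zero_mul])]
  exact sum_wordProd_mul_star hrow α

theorem word_magic_unitary_general {B : Type*} [NormedRing B] [StarRing B]
    [CStarRing B] [CompleteSpace B] [NormedAlgebra ℂ B] [StarModule ℂ B]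
    {N : ℕ} (A : Matrix (Fin N) (Fin N) ℕ)
    (u : Fin N → Fin N → B)
    (hpi : ∀ a b, u a b * star (u a b) * u a b = u a b)
    (p q : Fin N → Fin N → B)
    (hp : ∀ a b, p a b = u a b * star (u a b))
    (hq : ∀ a b, q a b = star (u a b) * u a b)
    (hprow : ∀ a, ∑ b, p a b = 1) (hpcol : ∀ a, ∑ b, p b a = 1)
    (hqrow : ∀ a, ∑ b, q a b = 1)
    (hint : ∀ a d, ∑ b, A a b • p b d = ∑ b, A b d • q a b)
    (n : ℕ) :
    ∀ α : Fin (n + 1) → Fin N, Adm A α →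
      (∑ β ∈ Finset.univ.filter (fun β : Fin (n + 1) → Fin N => Adm A β),
          (List.ofFn fun i => u (α i) (β i)).prod *
            star ((List.ofFn fun i => u (α i) (β i)).prod) = 1) ∧
      (∑ β ∈ Finset.univ.filter (fun β : Fin (n + 1) → Fin N => Adm A β),
          (List.ofFn fun i => u (β i) (α i)).prod *
            star ((List.ofFn fun i => u (β i) (α i)).prod) = 1) := by
  intro α hα
  obtain rfl : p = fun a b => u a b * star (u a b) := funext₂ hp
  obtain rfl : q = fun a b => star (u a b) * u a b := funext₂ hq
  let _ : CStarAlgebra B := {}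
  have hu : ∀ {a b c d}, A a c ≠ A b d → u a b * u c d = 0 :=
    mul_eq_zero_of_transition_ne hpi hpcol hqrow hint
  exact ⟨sum_adm_wordProd_mul_star hprow hu α hα,
    sum_adm_wordProd_mul_star (u := fun a b => u b a) hpcol (fun h => hu h.symm) α hα⟩

/-- Let `A ∈ M_N({0,1})` be primitive, `B` a unital C*-algebra,
with elements `u_{αβ} ∈ B` (for letters `α, β`) whose range projections `p` and
source projections `q` form magic unitaries with `A p = q A`. Assume moreover that
every product `u_{α₁β₁} ⋯ u_{α_{n+1}β_{n+1}}` along admissible words is a partial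
isometry. Then the matrix of range projections
`p_{αβ} = (u_{α₁β₁}⋯u_{α_{n+1}β_{n+1}})(u_{α₁β₁}⋯u_{α_{n+1}β_{n+1}})^*`
indexed by admissible words `α, β ∈ V_A^{n+1}` is a magic unitary: all its rows
and columns sum to `1`. -/
theorem word_magic_unitary {B : Type*} [NormedRing B] [StarRing B]
    [CStarRing B] [CompleteSpace B] [NormedAlgebra ℂ B] [StarModule ℂ B]
    {N : ℕ} (A : Matrix (Fin N) (Fin N) ℕ)
    (hA01 : ∀ i j, A i j = 0 ∨ A i j = 1)
    (hprim : ∃ k, ∀ i j, (A ^ k) i j ≠ 0)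
    (u : Fin N → Fin N → B)
    (hpi : ∀ a b, u a b * star (u a b) * u a b = u a b)
    (p q : Fin N → Fin N → B)
    (hp : ∀ a b, p a b = u a b * star (u a b))
    (hq : ∀ a b, q a b = star (u a b) * u a b)
    (hprow : ∀ a, ∑ b, p a b = 1) (hpcol : ∀ a, ∑ b, p b a = 1)
    (hqrow : ∀ a, ∑ b, q a b = 1) (hqcol : ∀ a, ∑ b, q b a = 1)
    (hint : ∀ a d, ∑ b, A a b • p b d = ∑ b, A b d • q a b)
    (n : ℕ)
    (hword : ∀ α β : Fin (n + 1) → Fin N, Adm A α → Adm A β →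
      (List.ofFn fun i => u (α i) (β i)).prod *
          star ((List.ofFn fun i => u (α i) (β i)).prod) *
          (List.ofFn fun i => u (α i) (β i)).prod =
        (List.ofFn fun i => u (α i) (β i)).prod) :
    ∀ α : Fin (n + 1) → Fin N, Adm A α →
      (∑ β ∈ Finset.univ.filter (fun β : Fin (n + 1) → Fin N => Adm A β),
          (List.ofFn fun i => u (α i) (β i)).prod *
            star ((List.ofFn fun i => u (α i) (β i)).prod) = 1) ∧
      (∑ β ∈ Finset.univ.filter (fun β : Fin (n + 1) → Fin N => Adm A β),
          (List.ofFn fun i => u (β i) (α i)).prod *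
            star ((List.ofFn fun i => u (β i) (α i)).prod) = 1) :=
  word_magic_unitary_general A u hpi p q hp hq hprow hpcol hqrow hint n
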